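/- arXiv:2108.09667 — 2 statements merged into one kernel-verified Lean document; each statement's English description precedes it below -/
import Mathlib

section
/- Let $A$ be a commutative ring, $M$ an $A$-module with dual module $M^{\vee} = \mathrm{Hom}_A(M, A)$, and $N \in \mathrm{End}_A(M)$ with transpose ${}^tN \in \mathrm{End}_A(M^{\vee})$ given by ${}^tN(\varphi) = \varphi \circ N$. Let $\theta : M^{\vee} \to M$ be an $A$-linear map satisfying $\theta \circ {}^tN = N \circ \theta$, and assume there exists $e^* \in M^{\vee}$ such that every element of $M^{\vee}$ has the form $P({}^tN)(e^*)$ for some polynomial $P \in A[T]$. Then: (i) the $A$-bilinear pairing $\vartheta(v^*, u^*) := u^*(\theta(v^*))$ on $M^{\vee}$ is symmetric, i.e. $u^*(\theta(v^*)) = v^*(\theta(u^*))$ for all $u^*, v^* \in M^{\vee}$; (ii) if moreover $\theta$ is bijective, then the $A$-bilinear pairing $\varkappa(v, u) := (\theta^{-1}(N(v)))(u)$ on $M$ is symmetric. -/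
/-- Let `A` be a commutative ring, `M` an `A`-module with dual `M^∨`, `N` an endomorphism
of `M` with transpose `ᵗN = N.dualMap` on `M^∨`, and `θ : M^∨ → M` an `A`-linear map with
`θ ∘ ᵗN = N ∘ θ`.  Assume there is `e* ∈ M^∨` such that every element of `M^∨` has the
form `P(ᵗN)(e*)` for some polynomial `P ∈ A[T]`.  Then
(i) the pairing `ϑ(v*, u*) = u*(θ(v*))` on `M^∨` is symmetric, and
(ii) if `θ` is bijective, the pairing `κ(v, u) = (θ⁻¹(N v))(u)` on `M` is symmetric. -/
theorem stmt1 (A : Type*) [CommRing A] (M : Type*) [AddCommGroup M] [Module A M]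
    (N : M →ₗ[A] M) (θ : Module.Dual A M →ₗ[A] M)
    (hθN : θ ∘ₗ N.dualMap = N ∘ₗ θ)
    (estar : Module.Dual A M)
    (hcyc : ∀ φ : Module.Dual A M, ∃ P : Polynomial A,
      φ = (Polynomial.aeval (N.dualMap : Module.End A (Module.Dual A M)) P) estar) :
    (∀ u v : Module.Dual A M, u (θ v) = v (θ u)) ∧
    (∀ hb : Function.Bijective θ, ∀ v u : M,
      (LinearEquiv.ofBijective θ hb).symm (N v) u
        = (LinearEquiv.ofBijective θ hb).symm (N u) v) := by
  have hθN' : ∀ φ : Module.Dual A M, θ (N.dualMap φ) = N (θ φ) :=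
    fun φ => LinearMap.ext_iff.mp hθN φ
  have hpow : ∀ (n : ℕ) (φ : Module.Dual A M), θ ((N.dualMap ^ n) φ) = (N ^ n) (θ φ) := by
    intro n
    induction n with
    | zero => intro φ; simp
    | succ k ih =>
      intro φ
      rw [pow_succ, pow_succ, Module.End.mul_apply, Module.End.mul_apply, ih, hθN']
  have key : ∀ (P : Polynomial A) (φ : Module.Dual A M),
      θ ((Polynomial.aeval (N.dualMap : Module.End A (Module.Dual A M)) P) φ)
        = (Polynomial.aeval (N : Module.End A M) P) (θ φ) := by
    intro P
    induction P using Polynomial.induction_on' with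
    | add p q hp hq => intro φ; simp [hp φ, hq φ]
    | monomial n a =>
      intro φ
      simp [Polynomial.aeval_monomial, Module.End.mul_apply, Module.algebraMap_end_apply,
        map_smul, hpow]
  have hpow2 : ∀ (n : ℕ) (φ : Module.Dual A M) (x : M),
      ((N.dualMap ^ n) φ) x = φ ((N ^ n) x) := by
    intro n
    induction n with
    | zero => intro φ x; simp
    | succ k ih =>
      intro φ x
      rw [pow_succ, Module.End.mul_apply, ih, LinearMap.dualMap_apply,
        ← Module.End.mul_apply, ← pow_succ']
  have eval : ∀ (P : Polynomial A) (φ : Module.Dual A M) (x : M),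
      ((Polynomial.aeval (N.dualMap : Module.End A (Module.Dual A M)) P) φ) x
        = φ ((Polynomial.aeval (N : Module.End A M) P) x) := by
    intro P
    induction P using Polynomial.induction_on' with
    | add p q hp hq => intro φ x; simp [hp φ x, hq φ x]
    | monomial n a =>
      intro φ x
      simp [Polynomial.aeval_monomial, Module.End.mul_apply, Module.algebraMap_end_apply,
        hpow2]
  have sym : ∀ u v : Module.Dual A M, u (θ v) = v (θ u) := by
    intro u v
    obtain ⟨P, hP⟩ := hcyc u
    obtain ⟨Q, hQ⟩ := hcyc v
    rw [hP, hQ, key, key, eval, eval, ← Module.End.mul_apply, ← Module.End.mul_apply,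
      ← map_mul, ← map_mul, mul_comm]
  refine ⟨sym, fun hb v u => ?_⟩
  set eqv := LinearEquiv.ofBijective θ hb with heqv
  have happly : ∀ x : M, θ (eqv.symm x) = x := by
    intro x
    have := eqv.apply_symm_apply x
    exact this
  have hsymmN : ∀ w : M, eqv.symm (N w) = N.dualMap (eqv.symm w) := by
    intro w
    apply hb.injective
    show θ _ = θ _
    rw [hθN', happly, happly]
  calc eqv.symm (N v) u = (eqv.symm v) (N u) := by
        rw [hsymmN v, LinearMap.dualMap_apply]
    _ = (eqv.symm v) (θ (eqv.symm (N u))) := by rw [happly]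
    _ = (eqv.symm (N u)) (θ (eqv.symm v)) := sym _ _
    _ = eqv.symm (N u) v := by rw [happly]
end

section
/- Let $m, r$ be positive integers, $A = \mathbb{C}[z]/(z^m)$, and $B = \mathbb{C}[w]/(w^{mr})$, regarded as an $A$-algebra via $z \mapsto w^r$, so that $B$ is a free $A$-module of rank $r$ with basis $1, w, \dots, w^{r-1}$. Fix $0 \le k \le r-1$. For $f \in w^k B$ and $g \in w^{r-1-k} B$ one has $fg \in w^{r-1}B$, so there exists $h \in B$ with $w^{r-1}h = fg$; define $\Theta_k(f, g) := \mathrm{Tr}_{B/A}(\text{multiplication by } h) \in A$. Then: (i) $\Theta_k(f,g)$ is independent of the choice of such $h$; (ii) $\Theta_k$ descends to an $A$-bilinear pairing $\bar\Theta_k : \big(w^kB/w^{mr-r+k+1}B\big) \times \big(w^{r-1-k}B/w^{mr-k}B\big) \to A$; (iii) the induced $A$-linear map $w^kB/w^{mr-r+k+1}B \to \mathrm{Hom}_A\big(w^{r-1-k}B/w^{mr-k}B,\, A\big)$ is bijective. -/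
open Polynomial
set_option maxHeartbeats 1000000
set_option synthInstance.maxHeartbeats 400000
set_option linter.unusedSectionVars false

noncomputable section

/-- The truncated polynomial ring `ℂ[z]/(z^n)`. -/
abbrev TruncC (n : ℕ) : Type :=
  Polynomial ℂ ⧸ Ideal.span {(X : Polynomial ℂ) ^ n}

/-- The class of the variable in `ℂ[z]/(z^n)`. -/
abbrev wC (n : ℕ) : TruncC n :=
  Ideal.Quotient.mk (Ideal.span {(X : Polynomial ℂ) ^ n}) X

instance (n : ℕ) : CommRing (TruncC n) := Ideal.Quotient.commRing _

/-- The `A`-submodule `w^j B ⊆ B`, for `A = ℂ[z]/(z^m)` and `B = ℂ[w]/(w^{mr})`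
regarded as an `A`-algebra. -/
def Vfil (m r : ℕ) [Algebra (TruncC m) (TruncC (m * r))] (j : ℕ) :
    Submodule (TruncC m) (TruncC (m * r)) :=
  (Ideal.span {wC (m * r) ^ j}).restrictScalars (TruncC m)

namespace Aux4

abbrev mkT (n : ℕ) : Polynomial ℂ →ₐ[ℂ] TruncC n :=
  Ideal.Quotient.mkₐ ℂ (Ideal.span {(X : Polynomial ℂ) ^ n})

lemma mk_surj (n : ℕ) : Function.Surjective (mkT n) :=
  Ideal.Quotient.mkₐ_surjective ℂ _

lemma mk_eq_zero {n : ℕ} {p : ℂ[X]} : mkT n p = 0 ↔ X ^ n ∣ p := by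
  rw [Ideal.Quotient.mkₐ_eq_mk, Ideal.Quotient.eq_zero_iff_mem, Ideal.mem_span_singleton]

lemma w_eq (n : ℕ) : wC n = mkT n X := rfl

lemma w_pow (n e : ℕ) : wC n ^ e = mkT n (X ^ e) := by
  rw [w_eq, map_pow]

lemma w_pow_eq_zero (n : ℕ) {e : ℕ} (h : n ≤ e) : wC n ^ e = 0 := by
  rw [w_pow, mk_eq_zero]
  exact pow_dvd_pow _ h

lemma smul_pow_eq_zero {n e : ℕ} (he : e < n) {c : ℂ} (h : c • wC n ^ e = 0) : c = 0 := by
  by_contra hc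
  rw [w_pow, ← map_smul, mk_eq_zero, Polynomial.smul_eq_C_mul] at h
  have hne : (C c * X ^ e : ℂ[X]) ≠ 0 :=
    mul_ne_zero (C_ne_zero.mpr hc) (pow_ne_zero _ X_ne_zero)
  have hd := Polynomial.natDegree_le_of_dvd h hne
  rw [natDegree_X_pow, natDegree_C_mul hc, natDegree_X_pow] at hd
  omega


/-- canonical representative of degree < n -/
lemma exists_rep {n : ℕ} (hn : 0 < n) (x : TruncC n) :
    ∃ p : ℂ[X], p.natDegree < n ∧ mkT n p = x := by
  obtain ⟨q, hq⟩ := mk_surj n x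
  refine ⟨q %ₘ (X ^ n), ?_, ?_⟩
  · have hmono : (X ^ n : ℂ[X]).Monic := monic_X_pow n
    rcases eq_or_ne (q %ₘ X ^ n) 0 with h0 | h0
    · simpa [h0] using hn
    · have := Polynomial.degree_modByMonic_lt q hmono
      rw [degree_X_pow] at this
      exact natDegree_lt_iff_degree_lt h0 |>.mpr (by exact_mod_cast this)
  · have : mkT n (X ^ n * (q /ₘ X ^ n)) = 0 := by
      rw [mk_eq_zero]; exact Dvd.intro _ rfl
    have hsum := Polynomial.modByMonic_add_div q (X ^ n : ℂ[X])
    calc mkT n (q %ₘ X ^ n) = mkT n (q %ₘ X ^ n) + mkT n (X ^ n * (q /ₘ X ^ n)) := by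
          rw [this, add_zero]
      _ = mkT n q := by rw [← map_add, hsum]
      _ = x := hq

/-- spanning induction: to prove something for all elements of `TruncC n`,
enough on `c • w^e`. -/
lemma span_induction {n : ℕ} (S : Submodule ℂ (TruncC n))
    (h : ∀ (c : ℂ) (e : ℕ), c • wC n ^ e ∈ S) (x : TruncC n) : x ∈ S := by
  obtain ⟨p, hp⟩ := mk_surj n x
  subst hp
  induction p using Polynomial.induction_on' with
  | add p q hp hq => rw [map_add]; exact S.add_mem hp hq
  | monomial e c =>
      have : mkT n (monomial e c) = c • wC n ^ e := by
        rw [w_pow, ← map_smul, Polynomial.smul_eq_C_mul, C_mul_X_pow_eq_monomial]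
      rw [this]; exact h c e

lemma decomp (n : ℕ) (x : TruncC n) :
    ∃ (c : ℂ) (y : TruncC n), x = algebraMap ℂ (TruncC n) c + wC n * y := by
  obtain ⟨p, hp⟩ := mk_surj n x
  refine ⟨p.coeff 0, mkT n p.divX, ?_⟩
  have : algebraMap ℂ (TruncC n) (p.coeff 0) = mkT n (C (p.coeff 0)) := by
    rw [← Polynomial.algebraMap_eq, AlgHom.commutes]
  rw [this, w_eq, ← map_mul, ← map_add, ← hp]
  congr 1
  rw [add_comm]
  exact (Polynomial.X_mul_divX_add p).symm


lemma mk_Cmul {n : ℕ} (c : ℂ) (e : ℕ) : mkT n (C c * X ^ e) = c • wC n ^ e := by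
  rw [w_pow, ← map_smul, Polynomial.smul_eq_C_mul]

lemma mk_monomial {n : ℕ} (e : ℕ) (c : ℂ) : mkT n (monomial e c) = c • wC n ^ e := by
  rw [← C_mul_X_pow_eq_monomial, mk_Cmul]

lemma ann_z (n : ℕ) (hn : 0 < n) {a : TruncC n} (ha : wC n ^ (n - 1) * a = 0) :
    ∃ b, a = wC n * b := by
  obtain ⟨p, hp⟩ := mk_surj n a
  have h0 : mkT n (X ^ (n - 1) * p) = 0 := by
    rw [map_mul, hp, ← w_pow, ha]
  rw [mk_eq_zero] at h0
  have hsplit : (X : ℂ[X]) ^ n = X ^ (n - 1) * X := by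
    rw [← pow_succ]; congr 1; omega
  rw [hsplit] at h0
  have hdvd : (X : ℂ[X]) ∣ p :=
    (mul_dvd_mul_iff_left (pow_ne_zero (n - 1) (X_ne_zero (R := ℂ)))).mp h0
  obtain ⟨t, ht⟩ := hdvd
  exact ⟨mkT n t, by rw [← hp, ht, map_mul]; rfl⟩

lemma idx_unique {r q i q' i' : ℕ} (hi : i < r) (hi' : i' < r)
    (h : q * r + i = q' * r + i') : q = q' ∧ i = i' := by
  have h1 : (q * r + i) % r = i := by
    rw [add_comm, Nat.add_mul_mod_self_right, Nat.mod_eq_of_lt hi]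
  have h2 : (q' * r + i') % r = i' := by
    rw [add_comm, Nat.add_mul_mod_self_right, Nat.mod_eq_of_lt hi']
  have hii : i = i' := by rw [← h1, ← h2, h]
  subst hii
  have hr : 0 < r := Nat.pos_of_ne_zero (by rintro rfl; omega)
  have : q * r = q' * r := by omega
  exact ⟨Nat.eq_of_mul_eq_mul_right hr this, rfl⟩

section Main
variable (m r : ℕ) [Algebra (TruncC m) (TruncC (m * r))]
  [IsScalarTower ℂ (TruncC m) (TruncC (m * r))]

local notation "A'" => TruncC m
local notation "B'" => TruncC (m * r)
local notation "w" => wC (m * r)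
local notation "z" => wC m
local notation "km" => algebraMap (TruncC m) (TruncC (m * r))

variable (halg : algebraMap (TruncC m) (TruncC (m * r)) (wC m) = wC (m * r) ^ r)

include halg

lemma smul_w (q : ℕ) (x : B') : (z ^ q) • x = w ^ (q * r) * x := by
  rw [Algebra.smul_def, map_pow, halg, ← pow_mul, mul_comm r q]

omit halg in
lemma alg_smul (c : ℂ) (x : A') :
    algebraMap A' B' (c • x) = c • algebraMap A' B' x := by
  rw [← IsScalarTower.coe_toAlgHom' ℂ A' B']
  exact map_smul _ c x

lemma li (hm : 0 < m) (hr : 0 < r) :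
    LinearIndependent A' (fun i : Fin r => w ^ (i : ℕ)) := by
  rw [Fintype.linearIndependent_iff]
  intro a hsum i₀
  choose P hPdeg hPmk using fun i : Fin r => exists_rep hm (a i)
  set Q : ℂ[X] := ∑ i : Fin r, ∑ q ∈ Finset.range m, C ((P i).coeff q) * X ^ (q * r + i) with hQ
  have key : ∀ i : Fin r, a i • w ^ (i : ℕ)
      = ∑ q ∈ Finset.range m, mkT (m * r) (C ((P i).coeff q) * X ^ (q * r + (i : ℕ))) := by
    intro i
    rw [Algebra.smul_def, ← hPmk i]
    conv_lhs => rw [(P i).as_sum_range' m (hPdeg i)]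
    rw [map_sum, map_sum, Finset.sum_mul]
    refine Finset.sum_congr rfl fun q _ => ?_
    rw [mk_monomial, alg_smul m r _ _, map_pow, halg, ← pow_mul, mul_comm r q,
      smul_mul_assoc, ← pow_add, mk_Cmul]
  have hmkQ : mkT (m * r) Q = 0 := by
    rw [hQ, map_sum, ← hsum]
    exact (Finset.sum_congr rfl fun i _ => by rw [key i, map_sum]).symm
  have hQdeg : Q.natDegree < m * r := by
    have : Q.natDegree ≤ m * r - 1 := by
      refine Polynomial.natDegree_sum_le_of_forall_le _ _ fun i _ => ?_
      refine Polynomial.natDegree_sum_le_of_forall_le _ _ fun q hq => ?_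
      refine le_trans (Polynomial.natDegree_C_mul_le _ _) ?_
      rw [natDegree_X_pow]
      have hq' : q ≤ m - 1 := by
        have := Finset.mem_range.mp hq; omega
      have : q * r + (i : ℕ) ≤ (m - 1) * r + (r - 1) :=
        Nat.add_le_add (Nat.mul_le_mul_right r hq') (by omega)
      have h2 : (m - 1) * r + (r - 1) = m * r - 1 := by
        cases m with
        | zero => omega
        | succ m' => simp [Nat.succ_mul]; omega
      omega
    have : 0 < m * r := Nat.mul_pos hm hr
    omega
  have hQ0 : Q = 0 := by
    rw [mk_eq_zero] at hmkQ
    exact Polynomial.eq_zero_of_dvd_of_natDegree_lt hmkQ (by rwa [natDegree_X_pow])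
  -- extract coefficients
  have hcoeff : ∀ q₀, q₀ < m → (P i₀).coeff q₀ = 0 := by
    intro q₀ hq₀
    have : Q.coeff (q₀ * r + (i₀ : ℕ)) = (P i₀).coeff q₀ := by
      rw [hQ, Polynomial.finset_sum_coeff]
      rw [Finset.sum_eq_single i₀]
      · rw [Polynomial.finset_sum_coeff]
        rw [Finset.sum_eq_single q₀]
        · rw [Polynomial.coeff_C_mul, Polynomial.coeff_X_pow, if_pos rfl, mul_one]
        · intro q hq hne
          rw [Polynomial.coeff_C_mul, Polynomial.coeff_X_pow, if_neg, mul_zero]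
          intro hEq
          exact hne (idx_unique i₀.isLt i₀.isLt hEq).1.symm
        · intro h; exact absurd (Finset.mem_range.mpr hq₀) h
      · intro i _ hne
        rw [Polynomial.finset_sum_coeff]
        refine Finset.sum_eq_zero fun q _ => ?_
        rw [Polynomial.coeff_C_mul, Polynomial.coeff_X_pow, if_neg, mul_zero]
        intro hEq
        exact hne (Fin.val_injective (idx_unique i₀.isLt i.isLt hEq).2.symm)
      · intro h; exact absurd (Finset.mem_univ i₀) h
    rw [hQ0] at this
    simpa using this.symm
  have hP0 : P i₀ = 0 := by
    ext q
    rcases lt_or_ge q m with h | h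
    · simpa using hcoeff q h
    · simpa using Polynomial.coeff_eq_zero_of_natDegree_lt (lt_of_lt_of_le (hPdeg i₀) h)
  rw [← hPmk i₀, hP0, map_zero]


lemma spanning (hr : 0 < r) :
    ⊤ ≤ Submodule.span A' (Set.range (fun i : Fin r => w ^ (i : ℕ))) := by
  intro x _
  refine span_induction ((Submodule.span A' (Set.range (fun i : Fin r => w ^ (i : ℕ)))).restrictScalars ℂ) ?_ x
  intro c e
  refine Submodule.smul_mem _ c ?_
  show w ^ e ∈ Submodule.span A' _
  have : w ^ e = z ^ (e / r) • w ^ (e % r) := by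
    rw [smul_w m r halg, ← pow_add, Nat.div_add_mod']
  rw [this]
  exact Submodule.smul_mem _ _ (Submodule.subset_span ⟨⟨e % r, Nat.mod_lt e hr⟩, rfl⟩)

/-- the `A`-basis `1, w, ..., w^(r-1)` of `B`. -/
def bB (hm : 0 < m) (hr : 0 < r) : Module.Basis (Fin r) A' B' :=
  Module.Basis.mk (li m r halg hm hr) (spanning m r halg hr)

lemma bB_apply (hm : 0 < m) (hr : 0 < r) (i : Fin r) :
    bB m r halg hm hr i = w ^ (i : ℕ) := by
  rw [bB, Module.Basis.mk_apply]

lemma trace_w_lt (hm : 0 < m) (hr : 0 < r) (s : ℕ) (h0 : 0 < s) (hs : s < r) :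
    Algebra.trace A' B' (w ^ s) = 0 := by
  classical
  rw [Algebra.trace_eq_matrix_trace (bB m r halg hm hr), Matrix.trace]
  refine Finset.sum_eq_zero fun i _ => ?_
  rw [Matrix.diag, Algebra.leftMulMatrix_eq_repr_mul, bB_apply]
  rcases lt_or_ge (s + (i : ℕ)) r with hlt | hge
  · have hmul : w ^ s * w ^ (i : ℕ) = bB m r halg hm hr ⟨s + (i : ℕ), hlt⟩ := by
      rw [← pow_add]
      exact (bB_apply m r halg hm hr ⟨s + (i : ℕ), hlt⟩).symm
    rw [hmul, Module.Basis.repr_self, Finsupp.single_apply, if_neg]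
    intro h
    have h' : s + (i : ℕ) = (i : ℕ) := by simpa using congrArg Fin.val h
    omega
  · have h2 : s + (i : ℕ) - r < r := by omega
    have hmul : w ^ s * w ^ (i : ℕ) = z • bB m r halg hm hr ⟨s + (i : ℕ) - r, h2⟩ := by
      rw [bB_apply]
      have hz : z • w ^ (s + (i : ℕ) - r) = w ^ (1 * r) * w ^ (s + (i : ℕ) - r) := by
        rw [← smul_w m r halg, pow_one]
      rw [hz, ← pow_add, ← pow_add]
      congr 1
      omega
    rw [hmul, map_smul, Module.Basis.repr_self, Finsupp.smul_apply, Finsupp.single_apply, if_neg,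
      smul_zero]
    intro h
    have h' : s + (i : ℕ) - r = (i : ℕ) := by simpa using congrArg Fin.val h
    omega

lemma trace_alg (hm : 0 < m) (hr : 0 < r) (x : A') : Algebra.trace A' B' (algebraMap A' B' x) = r • x := by
  rw [Algebra.trace_algebraMap_of_basis (bB m r halg hm hr), Fintype.card_fin]

lemma trace_w_full (hm : 0 < m) (hr : 0 < r) (q s : ℕ) (hs : s < r) :
    Algebra.trace A' B' (w ^ (q * r + s)) = if s = 0 then r • z ^ q else 0 := by
  have hw : w ^ (q * r + s) = z ^ q • w ^ s := by rw [smul_w m r halg, ← pow_add]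
  rw [hw, map_smul]
  rcases eq_or_ne s 0 with rfl | hs0
  · rw [if_pos rfl, pow_zero]
    have h1 : (1 : B') = algebraMap A' B' 1 := (map_one _).symm
    rw [h1, trace_alg m r halg hm hr]
    simp [smul_smul, mul_comm]
  · rw [if_neg hs0, trace_w_lt m r halg hm hr s (Nat.pos_of_ne_zero hs0) hs, smul_zero]

lemma trace_mul_high (hm : 0 < m) (hr : 0 < r) (e : ℕ) (he : m * r < e + r) (x : B') :
    Algebra.trace A' B' (w ^ e * x) = 0 := by
  let T : B' →ₗ[ℂ] A' :=
    ((Algebra.trace A' B').restrictScalars ℂ).comp (LinearMap.mulLeft ℂ (w ^ e))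
  have hx : x ∈ LinearMap.ker T := by
    refine span_induction (LinearMap.ker T) ?_ x
    intro c e'
    rw [LinearMap.mem_ker, map_smul]
    have hT : T (w ^ e') = Algebra.trace A' B' (w ^ (e + e')) := by
      show Algebra.trace A' B' (w ^ e * w ^ e') = _
      rw [← pow_add]
    rw [hT]
    have hdm : (e + e') / r * r + (e + e') % r = e + e' := Nat.div_add_mod' _ _
    rw [← hdm, trace_w_full m r halg hm hr _ _ (Nat.mod_lt _ hr)]
    rcases eq_or_ne ((e + e') % r) 0 with h0 | h0
    · rw [if_pos h0]
      have hq : m ≤ (e + e') / r := by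
        have hEq : (e + e') / r * r = e + e' := by omega
        have hq1 : m * r < ((e + e') / r + 1) * r := by
          rw [Nat.add_mul, one_mul, hEq]
          omega
        have := Nat.lt_of_mul_lt_mul_right hq1
        omega
      rw [w_pow_eq_zero m hq, smul_zero, smul_zero]
    · rw [if_neg h0, smul_zero]
  exact LinearMap.mem_ker.mp hx

lemma ann_w (hm : 0 < m) (hr : 0 < r) {x y : B'}
    (hxy : w ^ (r - 1) * x = w ^ (r - 1) * y) :
    ∃ c, x = y + w ^ (m * r - r + 1) * c := by
  have hrn : r ≤ m * r := Nat.le_mul_of_pos_left r hm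
  obtain ⟨p, hp⟩ := mk_surj (m * r) (x - y)
  have h0 : mkT (m * r) (X ^ (r - 1) * p) = 0 := by
    rw [map_mul, hp, ← w_pow, mul_sub, hxy, sub_self]
  rw [mk_eq_zero] at h0
  have hsplit : (X : ℂ[X]) ^ (m * r) = X ^ (r - 1) * X ^ (m * r - r + 1) := by
    rw [← pow_add]
    congr 1
    omega
  rw [hsplit] at h0
  have hdvd : (X : ℂ[X]) ^ (m * r - r + 1) ∣ p :=
    (mul_dvd_mul_iff_left (pow_ne_zero (r - 1) (X_ne_zero (R := ℂ)))).mp h0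
  obtain ⟨t, ht⟩ := hdvd
  refine ⟨mkT (m * r) t, ?_⟩
  have : x - y = w ^ (m * r - r + 1) * mkT (m * r) t := by
    rw [w_pow, ← map_mul, ← ht, hp]
  rw [← this]
  ring

lemma trace_unique (hm : 0 < m) (hr : 0 < r) {x y : B'}
    (hxy : w ^ (r - 1) * x = w ^ (r - 1) * y) :
    Algebra.trace A' B' x = Algebra.trace A' B' y := by
  have hrn : r ≤ m * r := Nat.le_mul_of_pos_left r hm
  obtain ⟨c, hc⟩ := ann_w m r halg hm hr hxy
  rw [hc, map_add, trace_mul_high m r halg hm hr _ (by omega) c, add_zero]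


omit halg in
lemma mem_V {j : ℕ} {x : B'} : x ∈ Vfil m r j ↔ ∃ u, w ^ j * u = x := by
  constructor
  · intro hx
    obtain ⟨c, hc⟩ := Ideal.mem_span_singleton'.mp hx
    exact ⟨c, by rw [← hc]; ring⟩
  · rintro ⟨u, rfl⟩
    exact Ideal.mem_span_singleton'.mpr ⟨u, mul_comm _ _⟩

/-- division by `w^(r-1)` (as a function; correct on multiples of `w^(r-1)`). -/
def divW (u : B') : B' :=
  mkT (m * r) ((Classical.choose (mk_surj (m * r) u)) /ₘ X ^ (r - 1))

omit halg in
lemma divW_spec (hm : 0 < m) {u : B'} (h : ∃ v, w ^ (r - 1) * v = u) :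
    w ^ (r - 1) * divW m r u = u := by
  obtain ⟨v, hv⟩ := h
  obtain ⟨qv, hqv⟩ := mk_surj (m * r) v
  have hpu : mkT (m * r) (Classical.choose (mk_surj (m * r) u)) = u :=
    Classical.choose_spec (mk_surj (m * r) u)
  set p := Classical.choose (mk_surj (m * r) u) with hp
  have h0 : mkT (m * r) (p - X ^ (r - 1) * qv) = 0 := by
    rw [map_sub, map_mul, hqv, ← w_pow, hpu, hv, sub_self]
  rw [mk_eq_zero] at h0
  obtain ⟨t, ht⟩ := h0
  have hdvd : (X : ℂ[X]) ^ (r - 1) ∣ p := by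
    have hps : p = X ^ (r - 1) * qv + X ^ (m * r) * t := by
      rw [← ht]; ring
    rw [hps]
    have hrn : r ≤ m * r := Nat.le_mul_of_pos_left r hm
    exact dvd_add ⟨qv, rfl⟩ ((pow_dvd_pow X (by omega)).mul_right t)
  have hmod : p %ₘ (X ^ (r - 1)) = 0 :=
    (Polynomial.modByMonic_eq_zero_iff_dvd (monic_X_pow _)).mpr hdvd
  have hfac : (X : ℂ[X]) ^ (r - 1) * (p /ₘ X ^ (r - 1)) = p := by
    conv_rhs => rw [← Polynomial.modByMonic_add_div p (X ^ (r - 1) : ℂ[X])]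
    rw [hmod, zero_add]
  show w ^ (r - 1) * mkT (m * r) (p /ₘ X ^ (r - 1)) = u
  rw [w_pow, ← map_mul, hfac, hpu]

/-- the pairing before descending to quotients. -/
def theta (x y : B') : A' :=
  Algebra.trace A' B' (divW m r (x * y))

lemma theta_spec (hm : 0 < m) (hr : 0 < r) {x y h : B'} (hh : w ^ (r - 1) * h = x * y) :
    theta m r x y = Algebra.trace A' B' h := by
  refine trace_unique m r halg hm hr ?_
  rw [divW_spec m r hm ⟨h, hh⟩, hh]

section withk
variable (hm : 0 < m) (hr : 0 < r) (k : ℕ) (hk : k ≤ r - 1)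

omit halg in
lemma exists_h (hk : k ≤ r - 1) {f g : B'} (hf : f ∈ Vfil m r k)
    (hg : g ∈ Vfil m r (r - 1 - k)) : ∃ h, w ^ (r - 1) * h = f * g := by
  obtain ⟨u, hu⟩ := (mem_V m r).mp hf
  obtain ⟨v, hv⟩ := (mem_V m r).mp hg
  refine ⟨u * v, ?_⟩
  rw [← hu, ← hv]
  have : w ^ (r - 1) = w ^ k * w ^ (r - 1 - k) := by
    rw [← pow_add]; congr 1; omega
  rw [this]; ring

/-- the bilinear pairing on `V_k × V_{r-1-k}`. -/
def Bl (hm : 0 < m) (hr : 0 < r) (hk : k ≤ r - 1) :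
    Vfil m r k →ₗ[A'] Vfil m r (r - 1 - k) →ₗ[A'] A' :=
  LinearMap.mk₂ (TruncC m) (fun f g => theta m r (f : B') (g : B'))
    (fun f f' g => by
      obtain ⟨h1, hh1⟩ := exists_h m r k hk f.2 g.2
      obtain ⟨h2, hh2⟩ := exists_h m r k hk f'.2 g.2
      show theta m r (((f + f' : Vfil m r k)) : B') (g : B')
        = theta m r (f : B') (g : B') + theta m r (f' : B') (g : B')
      have hsum : w ^ (r - 1) * (h1 + h2) = ((f + f' : Vfil m r k) : B') * (g : B') := by
        rw [mul_add, hh1, hh2, Submodule.coe_add, add_mul]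
      rw [theta_spec m r halg hm hr hsum, theta_spec m r halg hm hr hh1,
        theta_spec m r halg hm hr hh2, map_add])
    (fun c f g => by
      obtain ⟨h1, hh1⟩ := exists_h m r k hk f.2 g.2
      show theta m r (((c • f : Vfil m r k)) : B') (g : B') = c • theta m r (f : B') (g : B')
      have hc : w ^ (r - 1) * (c • h1) = ((c • f : Vfil m r k) : B') * (g : B') := by
        rw [Submodule.coe_smul, smul_mul_assoc, ← hh1, mul_smul_comm]
      rw [theta_spec m r halg hm hr hc, theta_spec m r halg hm hr hh1, map_smul])
    (fun f g g' => by
      obtain ⟨h1, hh1⟩ := exists_h m r k hk f.2 g.2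
      obtain ⟨h2, hh2⟩ := exists_h m r k hk f.2 g'.2
      show theta m r (f : B') (((g + g' : Vfil m r (r - 1 - k))) : B')
        = theta m r (f : B') (g : B') + theta m r (f : B') (g' : B')
      have hsum : w ^ (r - 1) * (h1 + h2) = (f : B') * ((g + g' : Vfil m r (r - 1 - k)) : B') := by
        rw [mul_add, hh1, hh2, Submodule.coe_add, mul_add]
      rw [theta_spec m r halg hm hr hsum, theta_spec m r halg hm hr hh1,
        theta_spec m r halg hm hr hh2, map_add])
    (fun c f g => by
      obtain ⟨h1, hh1⟩ := exists_h m r k hk f.2 g.2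
      show theta m r (f : B') (((c • g : Vfil m r (r - 1 - k))) : B')
        = c • theta m r (f : B') (g : B')
      have hc : w ^ (r - 1) * (c • h1) = (f : B') * ((c • g : Vfil m r (r - 1 - k)) : B') := by
        rw [Submodule.coe_smul, mul_smul_comm, hh1, mul_smul_comm]
      rw [theta_spec m r halg hm hr hc, theta_spec m r halg hm hr hh1, map_smul])


omit halg in
lemma fg_zero {j j' : ℕ} {x y : B'} (hx : x ∈ Vfil m r j) (hy : y ∈ Vfil m r j')
    (hjj : m * r ≤ j + j') : x * y = 0 := by
  obtain ⟨u, hu⟩ := (mem_V m r).mp hx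
  obtain ⟨v, hv⟩ := (mem_V m r).mp hy
  rw [← hu, ← hv]
  calc w ^ j * u * (w ^ j' * v) = w ^ (j + j') * (u * v) := by rw [pow_add]; ring
  _ = 0 := by rw [w_pow_eq_zero _ hjj, zero_mul]

lemma theta_zero (hm : 0 < m) (hr : 0 < r) {x y : B'} (hxy : x * y = 0) :
    theta m r x y = 0 := by
  rw [theta_spec m r halg hm hr (h := 0) (by rw [mul_zero, hxy]), map_zero]

lemma Bl_apply (hm : 0 < m) (hr : 0 < r) (hk : k ≤ r - 1) (f : Vfil m r k)
    (g : Vfil m r (r - 1 - k)) :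
    Bl m r halg k hm hr hk f g = theta m r (f : B') (g : B') := rfl

lemma hker2 (hm : 0 < m) (hr : 0 < r) (hk : k ≤ r - 1) :
    (Vfil m r (m * r - k)).comap (Vfil m r (r - 1 - k)).subtype ≤
      LinearMap.ker (Bl m r halg k hm hr hk).flip := by
  intro g hg
  rw [LinearMap.mem_ker]
  refine LinearMap.ext fun f => ?_
  rw [LinearMap.flip_apply, Bl_apply, LinearMap.zero_apply]
  refine theta_zero m r halg hm hr (fg_zero m r f.2 hg ?_)
  have hrn : r ≤ m * r := Nat.le_mul_of_pos_left r hm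
  omega

/-- The pairing with the second argument descended to the quotient. -/
def Lmap (hm : 0 < m) (hr : 0 < r) (hk : k ≤ r - 1) :
    Vfil m r k →ₗ[A']
      ((↥(Vfil m r (r - 1 - k)) ⧸ (Vfil m r (m * r - k)).comap (Vfil m r (r - 1 - k)).subtype)
        →ₗ[A'] A') :=
  (Submodule.liftQ _ (Bl m r halg k hm hr hk).flip (hker2 m r halg k hm hr hk)).flip

lemma Lmap_apply (hm : 0 < m) (hr : 0 < r) (hk : k ≤ r - 1) (f : Vfil m r k)
    (g : Vfil m r (r - 1 - k)) :
    Lmap m r halg k hm hr hk f (Submodule.Quotient.mk g) = theta m r (f : B') (g : B') := by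
  show (Submodule.liftQ _ (Bl m r halg k hm hr hk).flip (hker2 m r halg k hm hr hk))
      (Submodule.Quotient.mk g) f = _
  rw [Submodule.liftQ_apply, LinearMap.flip_apply, Bl_apply]

/-- The fully descended pairing. -/
def ThetaMap (hm : 0 < m) (hr : 0 < r) (hk : k ≤ r - 1) :
    (↥(Vfil m r k) ⧸ (Vfil m r (m * r - r + k + 1)).comap (Vfil m r k).subtype) →ₗ[A']
      ((↥(Vfil m r (r - 1 - k)) ⧸ (Vfil m r (m * r - k)).comap (Vfil m r (r - 1 - k)).subtype)
        →ₗ[A'] A') :=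
  Submodule.liftQ _ (Lmap m r halg k hm hr hk) (by
    intro f hf
    rw [LinearMap.mem_ker]
    refine Submodule.linearMap_qext _ (LinearMap.ext fun g => ?_)
    show Lmap m r halg k hm hr hk f (Submodule.Quotient.mk g) = 0
    rw [Lmap_apply]
    refine theta_zero m r halg hm hr (fg_zero m r hf g.2 ?_)
    have hrn : r ≤ m * r := Nat.le_mul_of_pos_left r hm
    omega)

lemma ThetaMap_spec (hm : 0 < m) (hr : 0 < r) (hk : k ≤ r - 1) (f : Vfil m r k)
    (g : Vfil m r (r - 1 - k)) (h : B') (hh : w ^ (r - 1) * h = (f : B') * (g : B')) :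
    ThetaMap m r halg k hm hr hk (Submodule.Quotient.mk f) (Submodule.Quotient.mk g)
      = Algebra.trace A' B' h := by
  show (Submodule.liftQ _ (Lmap m r halg k hm hr hk) _) _ _ = _
  rw [Submodule.liftQ_apply, Lmap_apply]
  exact theta_spec m r halg hm hr hh


lemma smul_z_cancel (hm : 0 < m) (hr : 0 < r) {c : ℂ}
    (h : c • ((r : ℕ) • (z ^ (m - 1) : A')) = 0) : c = 0 := by
  rw [← Nat.cast_smul_eq_nsmul ℂ, smul_smul] at h
  have := smul_pow_eq_zero (n := m) (e := m - 1) (by omega) h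
  have hr0 : (r : ℂ) ≠ 0 := Nat.cast_ne_zero.mpr (by omega)
  exact (mul_eq_zero.mp this).resolve_right hr0

lemma inj_aux (hm : 0 < m) (hr : 0 < r) (hk : k ≤ r - 1) (f : B') (hfk : f ∈ Vfil m r k)
    (H : ∀ g ∈ Vfil m r (r - 1 - k), ∀ h : B',
        w ^ (r - 1) * h = f * g → Algebra.trace A' B' h = 0) :
    ∀ d, d ≤ m * r - r + 1 → f ∈ Vfil m r (k + d) := by
  have hrn : r ≤ m * r := Nat.le_mul_of_pos_left r hm
  intro d
  induction d with
  | zero => intro _; simpa using hfk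
  | succ d ih =>
    intro hd
    have hfd : f ∈ Vfil m r (k + d) := ih (by omega)
    obtain ⟨u, hu⟩ := (mem_V m r).mp hfd
    obtain ⟨c₀, u', hu'⟩ := decomp (m * r) u
    set j := k + d with hj
    have hjle : j ≤ m * r - r + k := by omega
    have hgmem : (w ^ (m * r - 1 - j) : B') ∈ Vfil m r (r - 1 - k) :=
      (mem_V m r).mpr ⟨w ^ (m * r - 1 - j - (r - 1 - k)), by rw [← pow_add]; congr 1; omega⟩
    have hfw : f * w ^ (m * r - 1 - j) = c₀ • w ^ (m * r - 1) := by
      rw [← hu, hu']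
      calc w ^ j * (algebraMap ℂ B' c₀ + w * u') * w ^ (m * r - 1 - j)
          = algebraMap ℂ B' c₀ * (w ^ j * w ^ (m * r - 1 - j))
            + (w ^ j * w ^ (m * r - 1 - j)) * w * u' := by ring
        _ = algebraMap ℂ B' c₀ * w ^ (m * r - 1) + w ^ (m * r - 1) * w * u' := by
            rw [← pow_add, show j + (m * r - 1 - j) = m * r - 1 from by omega]
        _ = c₀ • w ^ (m * r - 1) + w ^ (m * r) * u' := by
            rw [← Algebra.smul_def, ← pow_succ, show m * r - 1 + 1 = m * r from by omega]
        _ = c₀ • w ^ (m * r - 1) := by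
            rw [w_pow_eq_zero _ le_rfl, zero_mul, add_zero]
    have hfg : w ^ (r - 1) * (c₀ • w ^ (m * r - r)) = f * w ^ (m * r - 1 - j) := by
      rw [hfw, mul_smul_comm, ← pow_add, show r - 1 + (m * r - r) = m * r - 1 from by omega]
    have htr := H _ hgmem _ hfg
    rw [LinearMap.map_smul_of_tower] at htr
    have hmr : m * r - r = (m - 1) * r + 0 := by
      rw [add_zero, Nat.sub_mul, one_mul]
    rw [hmr, trace_w_full m r halg hm hr (m - 1) 0 hr, if_pos rfl] at htr
    have hc₀ : c₀ = 0 := smul_z_cancel m r halg hm hr htr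
    have hfin : w ^ (j + 1) * u' = f := by
      rw [← hu, hu', hc₀, map_zero, zero_add, pow_succ]
      ring
    have : f ∈ Vfil m r (j + 1) := (mem_V m r).mpr ⟨u', hfin⟩
    simpa [hj, Nat.add_assoc] using this


omit halg in
lemma V_ind (c : ℕ) (S : Submodule ℂ B')
    (hS : ∀ (co : ℂ) (e : ℕ), c ≤ e → co • w ^ e ∈ S) :
    ∀ g ∈ Vfil m r c, g ∈ S := by
  intro g hg
  obtain ⟨u, hu⟩ := (mem_V m r).mp hg
  have hu' : u ∈ Submodule.comap (LinearMap.mulLeft ℂ (w ^ c)) S := by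
    refine span_induction _ ?_ u
    intro co e
    rw [Submodule.mem_comap, map_smul]
    show co • (w ^ c * w ^ e) ∈ S
    rw [← pow_add]
    exact hS co (c + e) (by omega)
  rw [Submodule.mem_comap] at hu'
  show g ∈ S
  rw [← hu]
  exact hu'

lemma ThetaMap_theta (hm : 0 < m) (hr : 0 < r) (hk : k ≤ r - 1) (f : Vfil m r k)
    (g : Vfil m r (r - 1 - k)) :
    ThetaMap m r halg k hm hr hk (Submodule.Quotient.mk f) (Submodule.Quotient.mk g)
      = theta m r (f : B') (g : B') := by
  show (Submodule.liftQ _ (Lmap m r halg k hm hr hk) _) _ _ = _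
  rw [Submodule.liftQ_apply, Lmap_apply]


omit halg in
lemma shuffle (x : B') (e1 e2 e3 : ℕ) (he : e1 + e2 = e3) :
    w ^ e1 * (x * w ^ e2) = x * w ^ e3 := by
  rw [← he, pow_add]; ring

omit halg in
lemma shuffle2 (x : B') (e1 e2 e3 : ℕ) (he : e1 + e2 = e3) :
    (x * w ^ e1) * w ^ e2 = x * w ^ e3 := by
  rw [← he, pow_add]; ring

omit halg in
lemma inv_r_smul (hr : 0 < r) (x y : A') :
    (r : ℂ)⁻¹ • (x • ((r : ℕ) • y)) = y * x := by
  rw [smul_eq_mul, ← Nat.cast_smul_eq_nsmul ℂ, mul_smul_comm, smul_smul,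
    inv_mul_cancel₀ (Nat.cast_ne_zero.mpr (by omega) : (r:ℂ) ≠ 0), one_smul, mul_comm]

lemma trace_h_eval (hm : 0 < m) (hr : 0 < r) (q t : ℕ) (ht : t < r) (a0 : A') (b : ℕ → A') :
    Algebra.trace A' B' ((r : ℂ)⁻¹ • (algebraMap A' B' a0 * w ^ (q * r + t)
        + ∑ t' ∈ Finset.Ico 1 r, algebraMap A' B' (b t') * w ^ (q * r + r + t - t')))
      = if t = 0 then z ^ q * a0 else z ^ (q + 1) * b t := by
  have hq1 : (q + 1) * r = q * r + r := by ring
  rw [LinearMap.map_smul_of_tower, map_add, map_sum]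
  have hterm1 : Algebra.trace A' B' (algebraMap A' B' a0 * w ^ (q * r + t))
      = a0 • (if t = 0 then (r : ℕ) • z ^ q else 0) := by
    rw [← Algebra.smul_def, map_smul, trace_w_full m r halg hm hr q t ht]
  have hterm2 : ∀ t' ∈ Finset.Ico 1 r,
      Algebra.trace A' B' (algebraMap A' B' (b t') * w ^ (q * r + r + t - t'))
        = if t' = t then b t • ((r : ℕ) • z ^ (q + 1)) else 0 := by
    intro t' ht'
    obtain ⟨h1, h2⟩ := Finset.mem_Ico.mp ht'
    rw [← Algebra.smul_def, map_smul]
    rcases eq_or_ne t' t with rfl | hne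
    · rw [if_pos rfl, show q * r + r + t' - t' = (q + 1) * r + 0 from by omega,
        trace_w_full m r halg hm hr (q + 1) 0 hr, if_pos rfl]
    · rw [if_neg hne]
      rcases lt_or_gt_of_ne hne with hlt | hgt
      · rw [show q * r + r + t - t' = (q + 1) * r + (t - t') from by omega,
          trace_w_full m r halg hm hr (q + 1) (t - t') (by omega), if_neg (by omega), smul_zero]
      · rw [show q * r + r + t - t' = q * r + (r + t - t') from by omega,
          trace_w_full m r halg hm hr q (r + t - t') (by omega), if_neg (by omega), smul_zero]
  rw [hterm1, Finset.sum_congr rfl hterm2]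
  rcases eq_or_ne t 0 with rfl | ht0
  · rw [if_pos rfl, if_pos rfl]
    rw [Finset.sum_ite_eq' (Finset.Ico 1 r) 0 (fun _ => b 0 • ((r:ℕ) • z ^ (q+1))),
      if_neg (by simp), add_zero, inv_r_smul m r hr]
  · rw [if_neg ht0, if_neg ht0, smul_zero, zero_add,
      Finset.sum_ite_eq' (Finset.Ico 1 r) t (fun _ => b t • ((r:ℕ) • z ^ (q+1))),
      if_pos (Finset.mem_Ico.mpr ⟨by omega, ht⟩), inv_r_smul m r hr]

omit halg in
lemma hwh (hk : k ≤ r - 1) (q t : ℕ) (ht : t < r) (a0 : A') (b : ℕ → A') :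
    w ^ (r - 1) * ((r : ℂ)⁻¹ • (algebraMap A' B' a0 * w ^ (q * r + t)
        + ∑ t' ∈ Finset.Ico 1 r, algebraMap A' B' (b t') * w ^ (q * r + r + t - t')))
      = ((r : ℂ)⁻¹ • (algebraMap A' B' a0 * w ^ k
          + ∑ t' ∈ Finset.Ico 1 r, algebraMap A' B' (b t') * w ^ (r + k - t')))
        * w ^ (q * r + (r - 1 - k) + t) := by
  rw [mul_smul_comm, smul_mul_assoc]
  congr 1
  rw [mul_add, add_mul, Finset.mul_sum, Finset.sum_mul]
  congr 1
  · rw [shuffle m r _ (r - 1) (q * r + t) (k + (q * r + (r - 1 - k) + t)) (by omega),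
      shuffle2 m r _ k (q * r + (r - 1 - k) + t) (k + (q * r + (r - 1 - k) + t)) rfl]
  · refine Finset.sum_congr rfl fun t' ht' => ?_
    obtain ⟨h1, h2⟩ := Finset.mem_Ico.mp ht'
    rw [shuffle m r _ (r - 1) (q * r + r + t - t')
        ((r + k - t') + (q * r + (r - 1 - k) + t)) (by omega),
      shuffle2 m r _ (r + k - t') (q * r + (r - 1 - k) + t)
        ((r + k - t') + (q * r + (r - 1 - k) + t)) rfl]


lemma theta_surj (hm : 0 < m) (hr : 0 < r) (hk : k ≤ r - 1) :
    Function.Surjective (ThetaMap m r halg k hm hr hk) := by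
  intro φ
  have hrn : r ≤ m * r := Nat.le_mul_of_pos_left r hm
  have Emem : ∀ t : ℕ, (w ^ ((r - 1 - k) + t) : B') ∈ Vfil m r (r - 1 - k) :=
    fun t => (mem_V m r).mpr ⟨w ^ t, by rw [← pow_add]⟩
  set E : ℕ → Vfil m r (r - 1 - k) := fun t => ⟨w ^ ((r - 1 - k) + t), Emem t⟩ with hE
  set a : ℕ → A' := fun t => φ (Submodule.Quotient.mk (E t)) with ha
  have hrel : ∀ t, 1 ≤ t → t < r → z ^ (m - 1) * a t = 0 := by
    intro t h1 h2
    have hm1r : (m - 1) * r = m * r - r := by rw [Nat.sub_mul, one_mul]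
    have hmem : z ^ (m - 1) • (E t) ∈
        (Vfil m r (m * r - k)).comap (Vfil m r (r - 1 - k)).subtype := by
      rw [Submodule.mem_comap]
      show z ^ (m - 1) • (w ^ ((r - 1 - k) + t)) ∈ Vfil m r (m * r - k)
      rw [smul_w m r halg]
      refine (mem_V m r).mpr ⟨w ^ ((m - 1) * r + ((r - 1 - k) + t) - (m * r - k)), ?_⟩
      rw [← pow_add, ← pow_add]
      congr 1
      omega
    have hzero : Submodule.Quotient.mk (z ^ (m - 1) • E t)
        = (0 : (↥(Vfil m r (r - 1 - k)) ⧸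
            (Vfil m r (m * r - k)).comap (Vfil m r (r - 1 - k)).subtype)) :=
      (Submodule.Quotient.mk_eq_zero _).mpr hmem
    calc z ^ (m - 1) * a t = z ^ (m - 1) • a t := rfl
    _ = φ (z ^ (m - 1) • Submodule.Quotient.mk (E t)) := (map_smul φ _ _).symm
    _ = φ (Submodule.Quotient.mk (z ^ (m - 1) • E t)) := by rw [Submodule.Quotient.mk_smul]
    _ = 0 := by rw [hzero, map_zero]
  have hbex : ∀ t, ∃ bt : A', (1 ≤ t → t < r → a t = z * bt) := by
    intro t
    by_cases hcase : 1 ≤ t ∧ t < r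
    · obtain ⟨bt, hbt⟩ := ann_z m hm (hrel t hcase.1 hcase.2)
      exact ⟨bt, fun _ _ => hbt⟩
    · exact ⟨0, fun hA hB => absurd ⟨hA, hB⟩ hcase⟩
  choose b hb using hbex
  set F : B' := (r : ℂ)⁻¹ • (algebraMap A' B' (a 0) * w ^ k
      + ∑ t' ∈ Finset.Ico 1 r, algebraMap A' B' (b t') * w ^ (r + k - t')) with hFdef
  have hFmem : F ∈ Vfil m r k := by
    refine (mem_V m r).mpr ⟨(r : ℂ)⁻¹ • (algebraMap A' B' (a 0)
      + ∑ t' ∈ Finset.Ico 1 r, algebraMap A' B' (b t') * w ^ (r - t')), ?_⟩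
    rw [hFdef, mul_smul_comm]
    congr 1
    rw [mul_add, Finset.mul_sum]
    congr 1
    · exact mul_comm _ _
    · refine Finset.sum_congr rfl fun t' ht' => ?_
      obtain ⟨h1, h2⟩ := Finset.mem_Ico.mp ht'
      rw [shuffle m r _ k (r - t') (r + k - t') (by omega)]
  have hmain : ∀ q t : ℕ, t < r →
      theta m r F (w ^ (q * r + (r - 1 - k) + t)) = z ^ q • a t := by
    intro q t ht
    have hspec := theta_spec m r halg hm hr (x := F) (y := w ^ (q * r + (r - 1 - k) + t))
      (h := (r : ℂ)⁻¹ • (algebraMap A' B' (a 0) * w ^ (q * r + t)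
        + ∑ t' ∈ Finset.Ico 1 r, algebraMap A' B' (b t') * w ^ (q * r + r + t - t')))
      (by rw [hwh m r k hk q t ht (a 0) b, hFdef])
    rw [hspec, trace_h_eval m r halg hm hr q t ht (a 0) b]
    rcases eq_or_ne t 0 with rfl | ht0
    · rw [if_pos rfl, smul_eq_mul]
    · rw [if_neg ht0, smul_eq_mul, hb t (by omega) ht, ← mul_assoc, ← pow_succ]
  set Dm : Vfil m r (r - 1 - k) →ₗ[A'] A' :=
    Bl m r halg k hm hr hk ⟨F, hFmem⟩ - φ.comp (Submodule.mkQ _) with hDm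
  have hgen : ∀ (co : ℂ) (e : ℕ), (r - 1 - k) ≤ e →
      co • w ^ e ∈ Submodule.map ((Vfil m r (r - 1 - k)).subtype.restrictScalars ℂ)
        (LinearMap.ker (Dm.restrictScalars ℂ)) := by
    intro co e he
    have hemem : (w ^ e : B') ∈ Vfil m r (r - 1 - k) :=
      (mem_V m r).mpr ⟨w ^ (e - (r - 1 - k)), by rw [← pow_add]; congr 1; omega⟩
    refine Submodule.mem_map.mpr ⟨co • ⟨w ^ e, hemem⟩, ?_, rfl⟩
    rw [LinearMap.mem_ker, map_smul]
    have hDe : Dm ⟨w ^ e, hemem⟩ = 0 := by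
      have ht : (e - (r - 1 - k)) % r < r := Nat.mod_lt _ hr
      have hq : (e - (r - 1 - k)) / r * r + (e - (r - 1 - k)) % r = e - (r - 1 - k) :=
        Nat.div_add_mod' _ _
      have hsub : (⟨w ^ e, hemem⟩ : Vfil m r (r - 1 - k))
          = z ^ ((e - (r - 1 - k)) / r) • E ((e - (r - 1 - k)) % r) := by
        apply Subtype.ext
        show w ^ e = z ^ ((e - (r - 1 - k)) / r) • (w ^ ((r - 1 - k) + (e - (r - 1 - k)) % r))
        rw [smul_w m r halg, ← pow_add]
        congr 1
        omega
      rw [hDm, LinearMap.sub_apply, LinearMap.comp_apply, Submodule.mkQ_apply, Bl_apply,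
        hsub, Submodule.Quotient.mk_smul, map_smul]
      have hcoe : ((z ^ ((e - (r - 1 - k)) / r) • E ((e - (r - 1 - k)) % r) :
          Vfil m r (r - 1 - k)) : B')
          = w ^ ((e - (r - 1 - k)) / r * r + (r - 1 - k) + (e - (r - 1 - k)) % r) := by
        show z ^ ((e - (r - 1 - k)) / r) • (w ^ ((r - 1 - k) + (e - (r - 1 - k)) % r)) = _
        rw [smul_w m r halg, ← pow_add]
        congr 1
        omega
      rw [hcoe, hmain _ _ ht, sub_self]
    show co • Dm ⟨w ^ e, hemem⟩ = 0
    rw [hDe, smul_zero]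
  have hDzero : ∀ g : Vfil m r (r - 1 - k), Dm g = 0 := by
    intro g
    have hmem := V_ind m r (r - 1 - k) _ hgen (g : B') g.2
    obtain ⟨y, hy, hyeq⟩ := hmem
    have : y = g := Subtype.coe_injective hyeq
    rw [← this]
    exact hy
  refine ⟨Submodule.Quotient.mk ⟨F, hFmem⟩, ?_⟩
  refine Submodule.linearMap_qext _ (LinearMap.ext fun g => ?_)
  show ThetaMap m r halg k hm hr hk (Submodule.Quotient.mk ⟨F, hFmem⟩)
      (Submodule.Quotient.mk g) = φ (Submodule.Quotient.mk g)
  rw [ThetaMap_theta]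
  have hg := hDzero g
  rw [hDm, LinearMap.sub_apply, sub_eq_zero, Bl_apply] at hg
  simpa using hg


lemma theta_inj (hm : 0 < m) (hr : 0 < r) (hk : k ≤ r - 1) :
    Function.Injective (ThetaMap m r halg k hm hr hk) := by
  have hrn : r ≤ m * r := Nat.le_mul_of_pos_left r hm
  have h0 : ∀ x, ThetaMap m r halg k hm hr hk x = 0 → x = 0 := by
    intro x hx
    obtain ⟨f, rfl⟩ := Submodule.Quotient.mk_surjective _ x
    rw [Submodule.Quotient.mk_eq_zero, Submodule.mem_comap]
    have H : ∀ g ∈ Vfil m r (r - 1 - k), ∀ h : B',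
        w ^ (r - 1) * h = (f : B') * g → Algebra.trace A' B' h = 0 := by
      intro g hg h hh
      have hs := ThetaMap_spec m r halg k hm hr hk f ⟨g, hg⟩ h hh
      rw [hx] at hs
      simpa using hs.symm
    have hmem := inj_aux m r halg k hm hr hk (f : B') f.2 H (m * r - r + 1) le_rfl
    have heq : k + (m * r - r + 1) = m * r - r + k + 1 := by omega
    rw [heq] at hmem
    exact hmem
  intro x y hxy
  have := h0 (x - y) (by rw [map_sub, hxy, sub_self])
  exact sub_eq_zero.mp this

end withk
end Main
end Aux4

/-- Let `A = ℂ[z]/(z^m)`, `B = ℂ[w]/(w^{mr})`, regarded as an `A`-algebra via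
`z ↦ w^r`, and fix `0 ≤ k ≤ r-1`.  For `f ∈ w^k B`, `g ∈ w^{r-1-k} B` there is `h ∈ B`
with `w^{r-1} h = f g`, and `Θ_k (f, g) := Tr_{B/A}(h)` is (i) independent of the choice
of `h`, (ii) descends to an `A`-bilinear pairing
`Θ̄_k : (w^k B / w^{mr-r+k+1} B) × (w^{r-1-k} B / w^{mr-k} B) → A`, and (iii) the induced
`A`-linear map `w^k B / w^{mr-r+k+1} B → Hom_A (w^{r-1-k} B / w^{mr-k} B, A)` is
bijective. -/
theorem stmt4 (m r : ℕ) (hm : 0 < m) (hr : 0 < r)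
    [Algebra (TruncC m) (TruncC (m * r))] [IsScalarTower ℂ (TruncC m) (TruncC (m * r))]
    (halg : algebraMap (TruncC m) (TruncC (m * r)) (wC m) = wC (m * r) ^ r)
    (k : ℕ) (hk : k ≤ r - 1) :
    (∀ f ∈ Vfil m r k, ∀ g ∈ Vfil m r (r - 1 - k), ∃ h : TruncC (m * r),
        wC (m * r) ^ (r - 1) * h = f * g) ∧
    (∀ f ∈ Vfil m r k, ∀ g ∈ Vfil m r (r - 1 - k), ∀ h h' : TruncC (m * r),
        wC (m * r) ^ (r - 1) * h = f * g → wC (m * r) ^ (r - 1) * h' = f * g →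
        Algebra.trace (TruncC m) (TruncC (m * r)) h
          = Algebra.trace (TruncC m) (TruncC (m * r)) h') ∧
    (∃ Θ : (↥(Vfil m r k) ⧸
              (Vfil m r (m * r - r + k + 1)).comap (Vfil m r k).subtype) →ₗ[TruncC m]
           ((↥(Vfil m r (r - 1 - k)) ⧸
              (Vfil m r (m * r - k)).comap (Vfil m r (r - 1 - k)).subtype) →ₗ[TruncC m]
            TruncC m),
      (∀ (f : ↥(Vfil m r k)) (g : ↥(Vfil m r (r - 1 - k))) (h : TruncC (m * r)),
          wC (m * r) ^ (r - 1) * h = (f : TruncC (m * r)) * (g : TruncC (m * r)) →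
          Θ (Submodule.Quotient.mk f) (Submodule.Quotient.mk g)
            = Algebra.trace (TruncC m) (TruncC (m * r)) h) ∧
      Function.Bijective Θ) := by
  refine ⟨?_, ?_, ?_⟩
  · intro f hf g hg
    exact Aux4.exists_h m r k hk hf hg
  · intro f hf g hg h h' hh hh'
    exact Aux4.trace_unique m r halg hm hr (hh.trans hh'.symm)
  · refine ⟨Aux4.ThetaMap m r halg k hm hr hk, ?_,
      Aux4.theta_inj m r halg k hm hr hk, Aux4.theta_surj m r halg k hm hr hk⟩
    intro f g h hh
    exact Aux4.ThetaMap_spec m r halg k hm hr hk f g h hh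

end
end
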